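/- For all t ≥ 1, 5^(t+1) − 4·r'(t−1) < 2·5^t. -/
import Mathlib

def r5' : ℕ → ℕ
  | 0 => 4
  | 1 => 20
  | j + 2 => r5' j + 4 * 5 ^ (j + 2) - 1

lemma key5 : ∀ j : ℕ, 3 * 5 ^ (j + 1) < 4 * r5' j
  | 0 => by norm_num [r5']
  | 1 => by norm_num [r5']
  | j + 2 => by
    have ih := key5 j
    have hpow : (1 : ℕ) ≤ 5 ^ (j + 1) := Nat.one_le_pow _ _ (by norm_num)
    have h2 : (5 : ℕ) ^ (j + 2) = 5 * 5 ^ (j + 1) := by ring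
    have h3 : (5 : ℕ) ^ (j + 3) = 25 * 5 ^ (j + 1) := by ring
    show 3 * 5 ^ (j + 3) < 4 * (r5' j + 4 * 5 ^ (j + 2) - 1)
    omega

theorem stmt14 : ∀ t : ℕ, 1 ≤ t →
    (5 : ℤ) ^ (t + 1) - 4 * (r5' (t - 1) : ℤ) < 2 * 5 ^ t := by
  intro t ht
  obtain ⟨j, rfl⟩ : ∃ j, t = j + 1 := ⟨t - 1, by omega⟩
  have h := key5 j
  have h' : (3 : ℤ) * 5 ^ (j + 1) < 4 * (r5' j : ℤ) := by exact_mod_cast h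
  have h2 : (5 : ℤ) ^ (j + 1 + 1) = 5 * 5 ^ (j + 1) := by ring
  simp only [Nat.add_sub_cancel]
  linarith
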